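/- Let n ≥ 2 be an integer. For every real polynomial f in two variables of total degree at most 2n−1, (1/π²) · ∫_{[−1,1]²} f(t₁,t₂) · (1−t₁²)^{−1/2} · (1−t₂²)^{−1/2} dt₁ dt₂ = (1/(2n²)) · Σ_{k ∈ Ξ_n} λ_k · f(cos(k₁π/n), cos(k₂π/n)). -/

import Mathlib

open MeasureTheory

attribute [local instance] Classical.propDecidable

/-- Ξ_n = {k : 0 ≤ k_i ≤ n, k1 ≡ k2 (mod 2)}. -/
noncomputable def Xi2 (n : ℕ) : Finset (ℤ × ℤ) :=
  (Finset.Icc ((0 : ℤ), (0 : ℤ)) ((n : ℤ), (n : ℤ))).filter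
    fun k => k.1 % 2 = k.2 % 2

/-- The cubature weight λ_k on Ξ_n. -/
noncomputable def lam2 (n : ℕ) (k : ℤ × ℤ) : ℝ :=
  if (0 < k.1 ∧ k.1 < (n : ℤ)) ∧ (0 < k.2 ∧ k.2 < (n : ℤ)) then 4
  else if (k.1 = 0 ∨ k.1 = (n : ℤ)) ∧ (k.2 = 0 ∨ k.2 = (n : ℤ)) then 1
  else 2

/-!
Let `w i` be the trapezoidal weights (`1` at `i = 0, n`, `2` otherwise), so that
`λ_(i,j) = w i * w j`. The one-dimensional Chebyshev–Lobatto rule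
`∑ i ≤ n, w i * P (cos (i π / n)) = (2 n / π) ∫ P dμ_T` is exact for `deg P < 2 n`, because
`T_m (cos (i π / n)) = cos (m i π / n)` and `∑ i ≤ n, w i * cos (m i π / n)` is `2 n` or `0`
according as `2 n ∣ m` or not. Writing the parity condition as `(1 + (-1) ^ (i + j)) / 2`, the
cubature sum of `P x * Q y` becomes half the product of two Lobatto sums plus half the product of
two sums twisted by `(-1) ^ i`. At the nodes the twist turns `T_m` into `T_(m + n)`, so the twisted
sum of a polynomial of degree `< n` vanishes, and `deg P + deg Q < 2 n` forces one factor to have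
degree `< n`. Monomials `x ^ a * y ^ b` are such products, and their weighted integral over the
square factors in the same way.
-/

open Real Finset Polynomial Polynomial.Chebyshev

noncomputable def lobattoWeight (n i : ℕ) : ℝ := if i = 0 ∨ i = n then 1 else 2

lemma sum_lobattoWeight_mul {n : ℕ} (hn : n ≠ 0) (g : ℕ → ℝ) :
    ∑ i ∈ range (n + 1), lobattoWeight n i * g i =
      2 * ∑ i ∈ range (n + 1), g i - g 0 - g n := by
  obtain ⟨m, rfl⟩ := Nat.exists_eq_succ_of_ne_zero hn
  have hfirst : lobattoWeight (m + 1) 0 = 1 := if_pos (Or.inl rfl)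
  have hlast : lobattoWeight (m + 1) (m + 1) = 1 := if_pos (Or.inr rfl)
  have hinner : ∀ i ∈ range m, lobattoWeight (m + 1) (i + 1) = 2 := fun i hi =>
    if_neg (by rw [mem_range] at hi; omega)
  rw [sum_range_succ', sum_range_succ, sum_range_succ', sum_range_succ, hfirst, hlast,
    sum_congr rfl fun i hi => by rw [hinner i hi], ← mul_sum]
  ring

lemma sum_lobattoWeight {n : ℕ} (hn : n ≠ 0) :
    ∑ i ∈ range (n + 1), lobattoWeight n i = 2 * n := by
  have := sum_lobattoWeight_mul hn fun _ => 1
  simp only [mul_one, sum_const, card_range, nsmul_eq_mul, Nat.cast_add, Nat.cast_one] at this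
  linarith

lemma sin_half_mul_sum_lobattoWeight_mul_cos {n : ℕ} (hn : n ≠ 0) (a : ℝ) :
    sin (a / 2) * ∑ i ∈ range (n + 1), lobattoWeight n i * cos (a * i) =
      sin (n * a) * cos (a / 2) := by
  have hsum := sin_mul_sum_cos (n + 1) a 0
  simp only [add_zero, Nat.cast_add, Nat.cast_one, add_sub_cancel_right] at hsum
  have hsin : sin ((n + 1) * a / 2) =
      sin (n * a / 2) * cos (a / 2) + cos (n * a / 2) * sin (a / 2) := by
    rw [← sin_add]; ring_nf
  have hsin2 : sin (n * a) = 2 * sin (n * a / 2) * cos (n * a / 2) := by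
    rw [← sin_two_mul]; ring_nf
  have hcos2 : cos (a * n) = 2 * cos (n * a / 2) ^ 2 - 1 := by
    rw [← cos_two_mul]; ring_nf
  rw [sum_lobattoWeight_mul hn, Nat.cast_zero, mul_zero, cos_zero]
  linear_combination 2 * hsum + 2 * cos (n * a / 2) * hsin - sin (a / 2) * hcos2
    - cos (a / 2) * hsin2

lemma sum_lobattoWeight_mul_cos_int_mul {n : ℕ} (hn : n ≠ 0) (m : ℤ) :
    ∑ i ∈ range (n + 1), lobattoWeight n i * cos (m * (i * π / n)) =
      if (2 * n : ℤ) ∣ m then 2 * (n : ℝ) else 0 := by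
  have hn' : (n : ℝ) ≠ 0 := Nat.cast_ne_zero.2 hn
  split_ifs with hm
  · obtain ⟨k, rfl⟩ := hm
    rw [← sum_lobattoWeight hn]
    refine sum_congr rfl fun i _ => ?_
    rw [show ((2 * n * k : ℤ) : ℝ) * (i * π / n) = ((k * i : ℤ) : ℝ) * (2 * π) by
      push_cast; field_simp, cos_int_mul_two_pi, mul_one]
  · have hsin : sin (m * π / n / 2) ≠ 0 := by
      intro h
      obtain ⟨k, hk⟩ := sin_eq_zero_iff.1 h
      refine hm ⟨k, ?_⟩
      have : (m : ℝ) = 2 * n * k := by field_simp at hk; linarith [pi_pos]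
      exact_mod_cast this
    have := sin_half_mul_sum_lobattoWeight_mul_cos hn (m * π / n)
    rw [show (n : ℝ) * (m * π / n) = m * π by field_simp, sin_int_mul_pi, zero_mul] at this
    rw [← (mul_eq_zero_iff_left hsin).1 this]
    refine sum_congr rfl fun i _ => ?_
    congr 2
    ring

lemma exists_sum_smul_T_eq {P : ℝ[X]} {N : ℕ} (hP : P.natDegree < N) :
    ∃ c : ℕ → ℝ, ∑ j ∈ range N, c j • T ℝ j = P := by
  have hmem : P ∈ degreeLT ℝ N :=
    mem_degreeLT.2 (degree_le_natDegree.trans_lt (by exact_mod_cast hP))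
  rw [← Sequence.span_degreeLT (chebyshevTsequence ℝ) (by simp),
    show Set.Iio N = ↑(range N) by simp, Submodule.mem_span_image_finset_iff_exists_fun'] at hmem
  simpa [chebyshevTsequence] using hmem

lemma sum_lobattoWeight_mul_eval_cos {n : ℕ} (hn : n ≠ 0) {P : ℝ[X]}
    (hP : P.natDegree < 2 * n) :
    ∑ i ∈ range (n + 1), lobattoWeight n i * P.eval (cos (i * π / n)) =
      2 * n / π * ∫ x, P.eval x ∂measureT := by
  obtain ⟨c, rfl⟩ := exists_sum_smul_T_eq hP
  simp only [eval_finsetSum, eval_smul, smul_eq_mul, T_real_cos, mul_sum]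
  rw [integral_finsetSum _ fun j _ => (integrable_measureT (by fun_prop)).const_mul (c j),
    mul_sum, sum_comm]
  refine sum_congr rfl fun j hj => ?_
  rw [integral_const_mul]
  simp_rw [mul_left_comm _ (c j), ← mul_sum]
  have hj : (j : ℤ) < 2 * n := by have := mem_range.1 hj; omega
  rw [sum_lobattoWeight_mul_cos_int_mul hn]
  rcases Nat.eq_zero_or_pos j with rfl | hj0
  · rw [Nat.cast_zero, integral_eval_T_real_measureT_zero, if_pos (dvd_zero _)]
    field_simp
  · rw [if_neg fun h => by have := Int.le_of_dvd (by omega) h; omega,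
      integral_eval_T_real_measureT_of_ne_zero (by omega)]
    simp

lemma sum_neg_one_pow_mul_lobattoWeight_mul_eval_cos {n : ℕ} (hn : n ≠ 0) {P : ℝ[X]}
    (hP : P.natDegree < n) :
    ∑ i ∈ range (n + 1), (-1) ^ i * (lobattoWeight n i * P.eval (cos (i * π / n))) = 0 := by
  obtain ⟨c, rfl⟩ := exists_sum_smul_T_eq hP
  simp only [eval_finsetSum, eval_smul, smul_eq_mul, T_real_cos, mul_sum]
  rw [sum_comm]
  refine sum_eq_zero fun j hj => ?_
  have hshift : ∀ i : ℕ,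
      (-1) ^ i * (lobattoWeight n i * (c j * cos ((j : ℤ) * (i * π / n)))) =
        c j * (lobattoWeight n i * cos (((j + n : ℕ) : ℤ) * (i * π / n))) := fun i => by
    rw [show (((j + n : ℕ) : ℤ) : ℝ) * (i * π / n) = (j : ℤ) * (i * π / n) + i * π by
      push_cast; field_simp, cos_add_nat_mul_pi]
    ring
  simp_rw [hshift, ← mul_sum, sum_lobattoWeight_mul_cos_int_mul hn]
  have hj : j < n := mem_range.1 hj
  rw [if_neg fun h => by have := Int.le_of_dvd (by omega) h; omega, mul_zero]

lemma two_mul_sum_filter_mod_two_eq {R : Type*} [CommRing R] (s t : Finset ℕ)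
    (u v : ℕ → R) :
    2 * ∑ ij ∈ (s ×ˢ t).filter (fun ij => ij.1 % 2 = ij.2 % 2), u ij.1 * v ij.2 =
      (∑ i ∈ s, u i) * (∑ j ∈ t, v j) +
        (∑ i ∈ s, (-1) ^ i * u i) * (∑ j ∈ t, (-1) ^ j * v j) := by
  rw [sum_mul_sum, sum_mul_sum, ← sum_product', ← sum_product', ← sum_add_distrib, sum_filter,
    mul_sum]
  refine sum_congr rfl fun ij _ => ?_
  split_ifs with h
  · have : Even (ij.1 + ij.2) := by rw [Nat.even_add, Nat.even_iff, Nat.even_iff]; omega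
    linear_combination (-(u ij.1 * v ij.2)) * (this.neg_one_pow : (-1 : R) ^ _ = 1)
  · have : Odd (ij.1 + ij.2) := by
      rw [← Nat.not_even_iff_odd, Nat.even_add, Nat.even_iff, Nat.even_iff]; omega
    linear_combination (-(u ij.1 * v ij.2)) * (this.neg_one_pow : (-1 : R) ^ _ = -1)

lemma Xi2_eq_image (n : ℕ) :
    Xi2 n = ((range (n + 1) ×ˢ range (n + 1)).filter fun ij => ij.1 % 2 = ij.2 % 2).image
      fun ij => ((ij.1 : ℤ), (ij.2 : ℤ)) := by
  ext ⟨a, b⟩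
  simp only [Xi2, mem_filter, mem_Icc, Prod.mk_le_mk, mem_image, mem_product, mem_range,
    Prod.exists, Prod.mk.injEq]
  constructor
  · rintro ⟨⟨⟨ha, hb⟩, ha', hb'⟩, hab⟩
    exact ⟨a.toNat, b.toNat, by omega⟩
  · rintro ⟨i, j, ⟨⟨hi, hj⟩, hij⟩, rfl, rfl⟩
    omega

lemma lam2_natCast {n i j : ℕ} (hi : i ≤ n) (hj : j ≤ n) :
    lam2 n (i, j) = lobattoWeight n i * lobattoWeight n j := by
  unfold lam2 lobattoWeight
  dsimp only
  split_ifs <;> first | omega | norm_num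

theorem sum_Xi2_lam2_mul_eval_mul_eval {n : ℕ} (hn : n ≠ 0) {P Q : ℝ[X]}
    (hPQ : P.natDegree + Q.natDegree < 2 * n) :
    ∑ k ∈ Xi2 n, lam2 n k * (P.eval (cos (k.1 * π / n)) * Q.eval (cos (k.2 * π / n))) =
      2 * n ^ 2 / π ^ 2 * ((∫ x, P.eval x ∂measureT) * ∫ x, Q.eval x ∂measureT) := by
  rw [Xi2_eq_image, sum_image fun a _ b _ h => by simpa [Prod.ext_iff] using h]
  have hterm : ∀ ij ∈ (range (n + 1) ×ˢ range (n + 1)).filter (fun ij => ij.1 % 2 = ij.2 % 2),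
      lam2 n (ij.1, ij.2) * (P.eval (cos (((ij.1 : ℤ) : ℝ) * π / n)) *
        Q.eval (cos (((ij.2 : ℤ) : ℝ) * π / n))) =
      lobattoWeight n ij.1 * P.eval (cos (ij.1 * π / n)) *
        (lobattoWeight n ij.2 * Q.eval (cos (ij.2 * π / n))) := fun ij hij => by
    simp only [mem_filter, mem_product, mem_range] at hij
    rw [lam2_natCast (by omega) (by omega), Int.cast_natCast, Int.cast_natCast]
    ring
  rw [sum_congr rfl hterm]
  have h2 := two_mul_sum_filter_mod_two_eq (range (n + 1)) (range (n + 1))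
    (fun i => lobattoWeight n i * P.eval (cos (i * π / n)))
    (fun j => lobattoWeight n j * Q.eval (cos (j * π / n)))
  rw [sum_lobattoWeight_mul_eval_cos hn (by omega), sum_lobattoWeight_mul_eval_cos hn (by omega)]
    at h2
  have hsigned :
      (∑ i ∈ range (n + 1), (-1) ^ i * (lobattoWeight n i * P.eval (cos (i * π / n)))) *
        (∑ j ∈ range (n + 1), (-1) ^ j * (lobattoWeight n j * Q.eval (cos (j * π / n)))) =
        0 := by
    rcases lt_or_ge P.natDegree n with hP | hQ
    · rw [sum_neg_one_pow_mul_lobattoWeight_mul_eval_cos hn hP, zero_mul]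
    · rw [sum_neg_one_pow_mul_lobattoWeight_mul_eval_cos hn (P := Q) (by omega), mul_zero]
  rw [hsigned, add_zero] at h2
  linear_combination h2 / 2

lemma setIntegral_Icc_mul_inv_sqrt_eq_integral_measureT (g : ℝ → ℝ) :
    ∫ x in Set.Icc (-1 : ℝ) 1, g x * (√(1 - x ^ 2))⁻¹ = ∫ x, g x ∂measureT := by
  rw [integral_measureT, intervalIntegral.integral_of_le (by norm_num),
    integral_Icc_eq_integral_Ioc]
  simp_rw [sqrt_inv]

lemma integrableOn_Icc_mul_inv_sqrt {g : ℝ → ℝ} (hg : ContinuousOn g (Set.Icc (-1) 1)) :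
    IntegrableOn (fun x => g x * (√(1 - x ^ 2))⁻¹) (Set.Icc (-1) 1) := by
  rw [← intervalIntegrable_iff_integrableOn_Icc_of_le (by norm_num)]
  simpa only [sqrt_inv] using intervalIntegrable_sqrt_one_sub_sq_inv.continuousOn_mul
    (by rwa [Set.uIcc_of_le (by norm_num)])

lemma setIntegral_Icc_prod_mul_eq_integral_measureT_mul (g h : ℝ → ℝ) :
    ∫ t in Set.Icc ((-1 : ℝ), (-1 : ℝ)) (1, 1),
        g t.1 * h t.2 * ((√(1 - t.1 ^ 2))⁻¹ * (√(1 - t.2 ^ 2))⁻¹) =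
      (∫ x, g x ∂measureT) * ∫ x, h x ∂measureT := by
  simp_rw [← setIntegral_Icc_mul_inv_sqrt_eq_integral_measureT, ← setIntegral_prod_mul,
    Measure.volume_eq_prod, Set.Icc_prod_eq, mul_mul_mul_comm]

lemma integrableOn_Icc_prod_mul_inv_sqrt {g h : ℝ → ℝ} (hg : ContinuousOn g (Set.Icc (-1) 1))
    (hh : ContinuousOn h (Set.Icc (-1) 1)) :
    IntegrableOn
      (fun t : ℝ × ℝ => g t.1 * h t.2 * ((√(1 - t.1 ^ 2))⁻¹ * (√(1 - t.2 ^ 2))⁻¹))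
      (Set.Icc (-1, -1) (1, 1)) := by
  rw [IntegrableOn, Set.Icc_prod_eq, Measure.volume_eq_prod, ← Measure.prod_restrict]
  exact ((integrableOn_Icc_mul_inv_sqrt hg).mul_prod (integrableOn_Icc_mul_inv_sqrt hh)).congr
    (ae_of_all _ fun t => by ring)

lemma MvPolynomial.eval_vecCons_fin_two {R : Type*} [CommSemiring R]
    (f : MvPolynomial (Fin 2) R) (x y : R) :
    MvPolynomial.eval ![x, y] f = ∑ d ∈ f.support, f.coeff d * (x ^ d 0 * y ^ d 1) := by
  simp [MvPolynomial.eval_eq', Fin.prod_univ_two]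

lemma setIntegral_eval_mul_inv_sqrt_mul_inv_sqrt (f : MvPolynomial (Fin 2) ℝ) :
    ∫ t in Set.Icc ((-1 : ℝ), (-1 : ℝ)) (1, 1),
        MvPolynomial.eval ![t.1, t.2] f * ((√(1 - t.1 ^ 2))⁻¹ * (√(1 - t.2 ^ 2))⁻¹) =
      ∑ d ∈ f.support,
        f.coeff d * ((∫ x, x ^ d 0 ∂measureT) * ∫ x, x ^ d 1 ∂measureT) := by
  simp_rw [MvPolynomial.eval_vecCons_fin_two, sum_mul, mul_assoc (f.coeff _)]
  rw [integral_finsetSum _ fun d _ =>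
    (integrableOn_Icc_prod_mul_inv_sqrt (g := (· ^ d 0)) (h := (· ^ d 1))
      (by fun_prop) (by fun_prop)).const_mul _]
  refine sum_congr rfl fun d _ => ?_
  rw [integral_const_mul,
    setIntegral_Icc_prod_mul_eq_integral_measureT_mul (fun x => x ^ d 0) (fun x => x ^ d 1)]

lemma sum_Xi2_lam2_mul_eval {n : ℕ} (hn : n ≠ 0) {f : MvPolynomial (Fin 2) ℝ}
    (hf : ∀ d ∈ f.support, d 0 + d 1 < 2 * n) :
    ∑ k ∈ Xi2 n, lam2 n k * MvPolynomial.eval ![cos (k.1 * π / n), cos (k.2 * π / n)] f =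
      2 * n ^ 2 / π ^ 2 *
        ∑ d ∈ f.support,
          f.coeff d * ((∫ x, x ^ d 0 ∂measureT) * ∫ x, x ^ d 1 ∂measureT) := by
  simp_rw [MvPolynomial.eval_vecCons_fin_two, mul_sum]
  rw [sum_comm]
  refine sum_congr rfl fun d hd => ?_
  have := sum_Xi2_lam2_mul_eval_mul_eval hn (P := X ^ d 0) (Q := X ^ d 1)
    (by simpa using hf d hd)
  simp only [eval_pow, eval_X] at this
  rw [mul_left_comm, ← this, mul_sum]
  exact sum_congr rfl fun k _ => mul_left_comm _ _ _

theorem gauss_type_cubature_first_kind_2d (n : ℕ) (hn : 2 ≤ n)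
    (f : MvPolynomial (Fin 2) ℝ) (hf : f.totalDegree ≤ 2 * n - 1) :
    (1 / Real.pi ^ 2) *
        ∫ t in Set.Icc ((-(1:ℝ), -(1:ℝ))) (((1:ℝ), (1:ℝ))),
          (MvPolynomial.eval ![t.1, t.2] f) *
            ((Real.sqrt (1 - t.1 ^ 2))⁻¹ * (Real.sqrt (1 - t.2 ^ 2))⁻¹)
      = (1 / (2 * (n : ℝ) ^ 2)) *
          ∑ k ∈ Xi2 n, lam2 n k *
            MvPolynomial.eval
              ![Real.cos (k.1 * Real.pi / n), Real.cos (k.2 * Real.pi / n)] f := by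
  have hdeg : ∀ d ∈ f.support, d 0 + d 1 < 2 * n := fun d hd => by
    have := (MvPolynomial.le_totalDegree hd).trans hf
    rw [Finsupp.sum_fintype _ _ fun _ => rfl, Fin.sum_univ_two] at this
    omega
  rw [setIntegral_eval_mul_inv_sqrt_mul_inv_sqrt, sum_Xi2_lam2_mul_eval (by omega) hdeg]
  field_simp
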